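/- There exists an absolute constant C₀ > 0 with the following property. Let s ≥ 2 and 1 ≤ a < b be integers, let 𝒟 ⊆ {0,1,…,s−1} be a digit set with 0 ∈ 𝒟 and s−1 ∉ 𝒟, and let ε ∈ (0,1). Define 𝔅(ξ) := ε 𝔅*(ξ) + (1 − ε) ℭ(ξ) and 𝔴(ξ) := 1̂(ξ s^{−b}) 𝔅(ξ) − 1̂(ξ s^{−a}). Then 𝔴(0) = 0 and |𝔴(ξ)| ≤ C₀ · min(1, |ξ|/s^a, s^b/|ξ|) for every nonzero ξ ∈ ℤ, uniformly in ε ∈ (0,1). -/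

import Mathlib

open Finset

/-- `e(y) = exp(-2πi y)`. -/
noncomputable def eneg (y : ℝ) : ℂ := Complex.exp (-(2 * Real.pi * Complex.I * (y : ℂ)))

/-- `1̂(θ) = ∫₀¹ e(xθ) dx`. -/
noncomputable def oneHat (θ : ℝ) : ℂ := ∫ x in (0:ℝ)..1, eneg (x * θ)

/-- The `j`-th base-`s` digit of the natural number `n`. -/
def digitOf (s n j : ℕ) : ℕ := n / s ^ j % s

/-- `𝔄(ξ; N, s, a) = N⁻¹ Σ_{k<N} e(ξ k s^{-a})`. -/
noncomputable def Afun (N s a : ℕ) (ξ : ℤ) : ℂ :=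
  (N : ℂ)⁻¹ * ∑ k ∈ Finset.range N, eneg ((ξ : ℝ) * k / (s : ℝ) ^ a)

/-- `ℭ(ξ) = s^{a-b} Σ_{ℓ < s^{b-a}} e(ξ ℓ s^{-b})`. -/
noncomputable def Cfun (s a b : ℕ) (ξ : ℤ) : ℂ :=
  (((s : ℝ) ^ a / (s : ℝ) ^ b : ℝ) : ℂ) *
    ∑ ℓ ∈ Finset.range (s ^ (b - a)), eneg ((ξ : ℝ) * ℓ / (s : ℝ) ^ b)

/-- `𝕃*`: the set of `ℓ < s^{b-a}` all of whose `b-a` base-`s` digits lie in `D`. -/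
def Lstar (s a b : ℕ) (D : Finset ℕ) : Finset ℕ :=
  (Finset.range (s ^ (b - a))).filter fun ℓ => ∀ j < b - a, digitOf s ℓ j ∈ D

/-- `𝔅*(ξ) = r^{a-b} Σ_{ℓ ∈ 𝕃*} e(ξ ℓ s^{-b})`, where `r = #D`. -/
noncomputable def Bstar (s a b : ℕ) (D : Finset ℕ) (ξ : ℤ) : ℂ :=
  (((D.card : ℝ) ^ a / (D.card : ℝ) ^ b : ℝ) : ℂ) *
    ∑ ℓ ∈ Lstar s a b D, eneg ((ξ : ℝ) * ℓ / (s : ℝ) ^ b)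

/-- `g(ξ, k; s, 𝒜) = (#𝒜)⁻¹ Σ_{d ∈ 𝒜} e(ξ d s^{-k})`. -/
noncomputable def gfun (s : ℕ) (A : Finset ℕ) (ξ : ℤ) (k : ℕ) : ℂ :=
  (A.card : ℂ)⁻¹ * ∑ d ∈ A, eneg ((ξ : ℝ) * d / (s : ℝ) ^ k)

/-!
Both `𝔅*(ξ)` and `ℭ(ξ)` are averages of phases `e(ξ ℓ s^{-b})` with `ℓ < s^{b-a}`: the weight
`r^{a-b}` is `1 / #𝕃*` because `#𝕃* = r^{b-a}`. Each such phase lies in the unit disk within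
`2π |ξ| s^{-a}` of `1`, and by convexity so does the mixture `𝔅(ξ)`; in particular `𝔅(0) = 1`.
For `ξ ≠ 0` three estimates combine: `|𝔴| ≤ 2` trivially; `1̂` is `2π`-Lipschitz, so
`|𝔴| ≤ |𝔅 - 1| + |1̂(ξ s^{-b}) - 1̂(ξ s^{-a})| ≤ 6π |ξ| s^{-a}`; and `|1̂(θ)| ≤ 1 / (π |θ|)`
gives `|𝔴| ≤ s^b / |ξ|`.
-/

open Metric Real

lemma eneg_eq_exp (y : ℝ) : eneg y = Complex.exp (Complex.I * ↑(-(2 * π * y))) := by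
  unfold eneg; push_cast; ring_nf

lemma norm_eneg (y : ℝ) : ‖eneg y‖ = 1 := by
  rw [eneg_eq_exp, mul_comm, Complex.norm_exp_ofReal_mul_I]

lemma norm_eneg_sub_one_le (y : ℝ) : ‖eneg y - 1‖ ≤ 2 * π * |y| := by
  rw [eneg_eq_exp]
  refine norm_exp_I_mul_ofReal_sub_one_le.trans_eq ?_
  rw [Real.norm_eq_abs, abs_neg, abs_mul, abs_of_pos two_pi_pos]

lemma eneg_add (u v : ℝ) : eneg (u + v) = eneg u * eneg v := by
  simp only [eneg, ← Complex.exp_add]; push_cast; ring_nf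

lemma norm_eneg_sub_le (u v : ℝ) : ‖eneg u - eneg v‖ ≤ 2 * π * |u - v| := by
  have h : eneg u - eneg v = eneg v * (eneg (u - v) - 1) := by
    rw [mul_sub, mul_one, ← eneg_add, add_sub_cancel]
  rw [h, norm_mul, norm_eneg, one_mul]
  exact norm_eneg_sub_one_le _

lemma oneHat_zero : oneHat 0 = 1 := by
  simp [oneHat, eneg]

lemma norm_oneHat_le_one (θ : ℝ) : ‖oneHat θ‖ ≤ 1 := by
  simpa [oneHat] using intervalIntegral.norm_integral_le_of_norm_le_const
    (a := 0) (b := 1) (f := fun x => eneg (x * θ)) fun x _ => (norm_eneg _).le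

lemma norm_oneHat_sub_le (θ θ' : ℝ) : ‖oneHat θ - oneHat θ'‖ ≤ 2 * π * |θ - θ'| := by
  have hint (θ : ℝ) : IntervalIntegrable (fun x : ℝ => eneg (x * θ)) MeasureTheory.volume 0 1 :=
    (by unfold eneg; fun_prop : Continuous fun x : ℝ => eneg (x * θ)).intervalIntegrable _ _
  rw [oneHat, oneHat, ← intervalIntegral.integral_sub (hint θ) (hint θ')]
  refine (intervalIntegral.norm_integral_le_of_norm_le_const (C := 2 * π * |θ - θ'|)
    fun x hx => ?_).trans_eq (by rw [sub_zero, abs_one, mul_one])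
  rw [Set.uIoc_of_le zero_le_one] at hx
  calc ‖eneg (x * θ) - eneg (x * θ')‖ ≤ 2 * π * (|x| * |θ - θ'|) := by
        rw [← abs_mul, mul_sub]; exact norm_eneg_sub_le _ _
    _ ≤ 2 * π * (1 * |θ - θ'|) := by
        gcongr; rw [abs_of_pos hx.1]; exact hx.2
    _ = 2 * π * |θ - θ'| := by rw [one_mul]

lemma oneHat_eq_of_ne_zero {θ : ℝ} (hθ : θ ≠ 0) :
    oneHat θ = (eneg θ - 1) / (-(2 * π * Complex.I * θ)) := by
  have hc : -(2 * π * Complex.I * θ) ≠ 0 := by simp [pi_ne_zero, hθ]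
  have h := integral_exp_mul_complex (a := 0) (b := 1) hc
  simp only [Complex.ofReal_zero, Complex.ofReal_one, mul_zero, mul_one, Complex.exp_zero] at h
  have hfun : (fun x : ℝ => eneg (x * θ)) =
      fun x : ℝ => Complex.exp (-(2 * π * Complex.I * θ) * x) := by
    funext x; simp only [eneg]; push_cast; ring_nf
  rw [oneHat, hfun, h, eneg]

lemma norm_oneHat_le_inv {θ : ℝ} (hθ : θ ≠ 0) : ‖oneHat θ‖ ≤ (π * |θ|)⁻¹ := by
  have hnum : ‖eneg θ - 1‖ ≤ 2 := (norm_sub_le _ _).trans (by simp [norm_eneg]; norm_num)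
  have hden : ‖-(2 * π * Complex.I * θ)‖ = 2 * (π * |θ|) := by
    simp [abs_of_pos pi_pos, mul_assoc]
  rw [oneHat_eq_of_ne_zero hθ, norm_div, hden, div_le_iff₀ (by positivity)]
  calc ‖eneg θ - 1‖ ≤ 2 := hnum
    _ = (π * |θ|)⁻¹ * (2 * (π * |θ|)) := by field_simp

def diskNearOne (δ : ℝ) : Set ℂ := closedBall 0 1 ∩ closedBall 1 δ

lemma mem_diskNearOne {δ : ℝ} {z : ℂ} : z ∈ diskNearOne δ ↔ ‖z‖ ≤ 1 ∧ ‖z - 1‖ ≤ δ := by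
  simp [diskNearOne, dist_eq_norm]

lemma convex_diskNearOne (δ : ℝ) : Convex ℝ (diskNearOne δ) :=
  (convex_closedBall _ _).inter (convex_closedBall _ _)

lemma eneg_mem_diskNearOne {y M : ℝ} (hy : |y| ≤ M) : eneg y ∈ diskNearOne (2 * π * M) :=
  mem_diskNearOne.2 ⟨(norm_eneg y).le, (norm_eneg_sub_one_le y).trans (by gcongr)⟩

lemma norm_oneHat_mul_sub_oneHat_le {θa θb : ℝ} {B : ℂ} (hθb : θb ≠ 0) (hθ : |θb| ≤ |θa|)
    (hB : B ∈ diskNearOne (2 * π * |θa|)) :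
    ‖oneHat θb * B - oneHat θa‖ ≤ 24 * min (min 1 |θa|) |θb|⁻¹ := by
  obtain ⟨hB_norm, hB_sub⟩ := mem_diskNearOne.1 hB
  have hθa : θa ≠ 0 := abs_pos.1 ((abs_pos.2 hθb).trans_le hθ)
  have hsum : ‖oneHat θb * B - oneHat θa‖ ≤ ‖oneHat θb‖ + ‖oneHat θa‖ := by
    refine (norm_sub_le _ _).trans ?_
    rw [norm_mul]
    gcongr
    exact mul_le_of_le_one_right (norm_nonneg _) hB_norm
  have h_one : ‖oneHat θb * B - oneHat θa‖ ≤ 2 := by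
    linarith [norm_oneHat_le_one θb, norm_oneHat_le_one θa]
  have h_small : ‖oneHat θb * B - oneHat θa‖ ≤ 24 * |θa| := by
    have hdiff : ‖oneHat θb - oneHat θa‖ ≤ 2 * π * (2 * |θa|) :=
      (norm_oneHat_sub_le _ _).trans (by gcongr; linarith [abs_sub θb θa])
    have hfirst : ‖oneHat θb * (B - 1)‖ ≤ 2 * π * |θa| := by
      rw [norm_mul]
      exact (mul_le_mul (norm_oneHat_le_one _) hB_sub (norm_nonneg _) zero_le_one).trans_eq
        (one_mul _)
    calc ‖oneHat θb * B - oneHat θa‖ = ‖oneHat θb * (B - 1) + (oneHat θb - oneHat θa)‖ := by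
          ring_nf
      _ ≤ 2 * π * |θa| + 2 * π * (2 * |θa|) := (norm_add_le _ _).trans (add_le_add hfirst hdiff)
      _ ≤ 24 * |θa| := by nlinarith [pi_le_four, abs_nonneg θa]
  have h_large : ‖oneHat θb * B - oneHat θa‖ ≤ |θb|⁻¹ := by
    have hb := norm_oneHat_le_inv hθb
    have ha : ‖oneHat θa‖ ≤ (π * |θb|)⁻¹ :=
      (norm_oneHat_le_inv hθa).trans (by gcongr)
    have hπ : 2 * (π * |θb|)⁻¹ ≤ |θb|⁻¹ := by
      rw [mul_inv, ← mul_assoc]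
      exact mul_le_of_le_one_left (by positivity)
        (by rw [← div_eq_mul_inv, div_le_one pi_pos]; linarith [pi_gt_three])
    linarith
  rw [mul_min_of_nonneg _ _ (by norm_num), mul_min_of_nonneg _ _ (by norm_num)]
  exact le_min (le_min (by linarith) h_small)
    (h_large.trans (le_mul_of_one_le_left (by positivity) (by norm_num)))

/-- `Lstar s a b D` is definitionally `digitSet s D (b - a)`. -/
def digitSet (s : ℕ) (D : Finset ℕ) (n : ℕ) : Finset ℕ :=
  (range (s ^ n)).filter fun ℓ => ∀ j < n, digitOf s ℓ j ∈ D

lemma digitOf_succ (s ℓ j : ℕ) : digitOf s ℓ (j + 1) = digitOf s (ℓ / s) j := by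
  simp [digitOf, Nat.div_div_eq_div_mul, pow_succ']

lemma mem_digitSet_succ {s : ℕ} (hs : 0 < s) {D : Finset ℕ} {n ℓ : ℕ} :
    ℓ ∈ digitSet s D (n + 1) ↔ ℓ % s ∈ D ∧ ℓ / s ∈ digitSet s D n := by
  simp only [digitSet, mem_filter, mem_range, Nat.forall_lt_succ_left, digitOf_succ,
    Nat.div_lt_iff_lt_mul hs, ← pow_succ]
  simp only [digitOf, pow_zero, Nat.div_one]
  tauto

lemma card_digitSet {s : ℕ} (hs : 0 < s) {D : Finset ℕ} (hD : D ⊆ range s) (n : ℕ) :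
    #(digitSet s D n) = #D ^ n := by
  induction n with
  | zero => simp [digitSet]
  | succ n ih =>
    have hdivmod {d m : ℕ} (hd : d ∈ D) : (d + s * m) % s = d ∧ (d + s * m) / s = m := by
      have hds := mem_range.1 (hD hd)
      rw [Nat.add_mul_mod_self_left, Nat.mod_eq_of_lt hds, Nat.add_mul_div_left _ _ hs,
        Nat.div_eq_of_lt hds, zero_add]
      exact ⟨rfl, rfl⟩
    rw [pow_succ', ← ih, ← card_product]
    refine card_nbij' (fun ℓ => (ℓ % s, ℓ / s)) (fun p => p.1 + s * p.2) ?_ ?_ ?_ ?_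
    · intro ℓ hℓ
      simpa [mem_digitSet_succ hs] using hℓ
    · rintro ⟨d, m⟩ hdm
      simpa [mem_digitSet_succ hs, hdivmod (mem_product.1 hdm).1] using mem_product.1 hdm
    · intro ℓ _
      exact Nat.mod_add_div ℓ s
    · rintro ⟨d, m⟩ hdm
      simp [hdivmod (mem_product.1 hdm).1]

lemma Convex.ofReal_inv_card_mul_sum_mem {ι : Type*} {S : Set ℂ} (hS : Convex ℝ S)
    {F : Finset ι} (hF : F.Nonempty) {z : ι → ℂ} (hz : ∀ i ∈ F, z i ∈ S) :
    (((#F : ℝ)⁻¹ : ℝ) : ℂ) * ∑ i ∈ F, z i ∈ S := by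
  have hw : ∑ _i ∈ F, (#F : ℝ)⁻¹ = 1 := by
    rw [sum_const, nsmul_eq_mul, mul_inv_cancel₀ (by exact_mod_cast hF.card_pos.ne')]
  simpa [mul_sum, Complex.real_smul] using hS.sum_mem (fun _ _ => by positivity) hw hz

lemma pow_div_pow_eq_inv_pow_sub {x : ℝ} (hx : x ≠ 0) {a b : ℕ} (hab : a ≤ b) :
    x ^ a / x ^ b = (x ^ (b - a))⁻¹ := by
  rw [pow_sub₀ x hx hab, mul_inv, inv_inv, div_eq_mul_inv, mul_comm]

lemma abs_mul_div_pow_le {s a b ℓ : ℕ} (hs : 0 < s) (hab : a ≤ b) (hℓ : ℓ ∈ range (s ^ (b - a)))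
    (ξ : ℤ) : |(ξ : ℝ) * ℓ / (s : ℝ) ^ b| ≤ |(ξ : ℝ) / (s : ℝ) ^ a| := by
  have hsb : (s : ℝ) ^ b = (s : ℝ) ^ a * (s : ℝ) ^ (b - a) := by
    rw [← pow_add, Nat.add_sub_cancel' hab]
  have hℓ' : (ℓ : ℝ) ≤ (s : ℝ) ^ (b - a) := by exact_mod_cast (mem_range.1 hℓ).le
  rw [hsb, mul_div_mul_comm, abs_mul]
  refine mul_le_of_le_one_right (abs_nonneg _) ?_
  rw [abs_of_nonneg (by positivity)]
  exact div_le_one_of_le₀ hℓ' (by positivity)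

lemma Cfun_mem_diskNearOne {s a b : ℕ} (hs : 0 < s) (hab : a ≤ b) (ξ : ℤ) :
    Cfun s a b ξ ∈ diskNearOne (2 * π * |(ξ : ℝ) / (s : ℝ) ^ a|) := by
  have hcoeff : (s : ℝ) ^ a / (s : ℝ) ^ b = (#(range (s ^ (b - a))) : ℝ)⁻¹ := by
    rw [card_range, Nat.cast_pow, pow_div_pow_eq_inv_pow_sub (by positivity) hab]
  rw [Cfun, hcoeff]
  exact (convex_diskNearOne _).ofReal_inv_card_mul_sum_mem
    (nonempty_range_iff.2 (by positivity))
    fun ℓ hℓ => eneg_mem_diskNearOne (abs_mul_div_pow_le hs hab hℓ ξ)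

lemma Bstar_mem_diskNearOne {s a b : ℕ} (hs : 0 < s) (hab : a ≤ b) {D : Finset ℕ}
    (hD : D ⊆ range s) (hD₀ : D.Nonempty) (ξ : ℤ) :
    Bstar s a b D ξ ∈ diskNearOne (2 * π * |(ξ : ℝ) / (s : ℝ) ^ a|) := by
  have hcard : #(Lstar s a b D) = #D ^ (b - a) := card_digitSet hs hD (b - a)
  have hcoeff : (#D : ℝ) ^ a / (#D : ℝ) ^ b = (#(Lstar s a b D) : ℝ)⁻¹ := by
    rw [hcard, Nat.cast_pow, pow_div_pow_eq_inv_pow_sub (by positivity) hab]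
  rw [Bstar, hcoeff]
  refine (convex_diskNearOne _).ofReal_inv_card_mul_sum_mem ?_
    fun ℓ hℓ => eneg_mem_diskNearOne (abs_mul_div_pow_le hs hab (mem_filter.1 hℓ).1 ξ)
  rw [← card_pos, hcard]
  exact pow_pos hD₀.card_pos _

/-- Lemma 9.5 (Pramanik–Zhang): there is an absolute constant `C₀ > 0` such that the
function `𝔴(ξ) = 1̂(ξ s^{−b}) 𝔅(ξ) − 1̂(ξ s^{−a})`, with
`𝔅 = ε 𝔅* + (1−ε) ℭ`, satisfies `𝔴(0) = 0` and
`|𝔴(ξ)| ≤ C₀ min(1, |ξ|/s^a, s^b/|ξ|)` for all nonzero `ξ`, uniformly in `ε ∈ (0,1)`. -/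
theorem wfun_estimate :
    ∃ C₀ : ℝ, 0 < C₀ ∧
      ∀ s a b : ℕ, ∀ D : Finset ℕ, 2 ≤ s → 1 ≤ a → a < b →
        D ⊆ Finset.range s → 0 ∈ D → s - 1 ∉ D →
        ∀ ε : ℝ, ε ∈ Set.Ioo (0 : ℝ) 1 →
          (oneHat ((0 : ℝ) / (s : ℝ) ^ b) *
              ((ε : ℂ) * Bstar s a b D 0 + ((1 - ε : ℝ) : ℂ) * Cfun s a b 0) -
            oneHat ((0 : ℝ) / (s : ℝ) ^ a) = 0) ∧
          ∀ ξ : ℤ, ξ ≠ 0 →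
            ‖oneHat ((ξ : ℝ) / (s : ℝ) ^ b) *
                ((ε : ℂ) * Bstar s a b D ξ + ((1 - ε : ℝ) : ℂ) * Cfun s a b ξ) -
              oneHat ((ξ : ℝ) / (s : ℝ) ^ a)‖ ≤
              C₀ * min (min 1 (|(ξ : ℝ)| / (s : ℝ) ^ a)) ((s : ℝ) ^ b / |(ξ : ℝ)|) := by
  refine ⟨24, by norm_num, fun s a b D hs _ hab hD hD₀ _ ε hε => ?_⟩
  have hs₀ : 0 < s := by omega
  have hmix (ξ : ℤ) : (ε : ℂ) * Bstar s a b D ξ + ((1 - ε : ℝ) : ℂ) * Cfun s a b ξ ∈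
      diskNearOne (2 * π * |(ξ : ℝ) / (s : ℝ) ^ a|) := by
    simpa only [Complex.real_smul] using convex_diskNearOne _
      (Bstar_mem_diskNearOne hs₀ hab.le hD ⟨0, hD₀⟩ ξ) (Cfun_mem_diskNearOne hs₀ hab.le ξ)
      hε.1.le (sub_nonneg.2 hε.2.le) (add_sub_cancel ε 1)
  constructor
  · have h₀ := (mem_diskNearOne.1 (hmix 0)).2
    simp only [Int.cast_zero, zero_div, abs_zero, mul_zero, norm_le_zero_iff, sub_eq_zero] at h₀
    rw [h₀, zero_div, zero_div, oneHat_zero, mul_one, sub_self]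
  · intro ξ hξ
    have hsa : (0 : ℝ) < (s : ℝ) ^ a := by positivity
    have hsb : (0 : ℝ) < (s : ℝ) ^ b := by positivity
    have hθ : |(ξ : ℝ) / (s : ℝ) ^ b| ≤ |(ξ : ℝ) / (s : ℝ) ^ a| := by
      rw [abs_div, abs_div, abs_of_pos hsa, abs_of_pos hsb]
      gcongr
      exact_mod_cast hs₀
    convert norm_oneHat_mul_sub_oneHat_le (div_ne_zero (by exact_mod_cast hξ) hsb.ne')
      hθ (hmix ξ) using 3
    · rw [abs_div, abs_of_pos hsa]
    · rw [abs_div, abs_of_pos hsb, inv_div]
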